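/- arXiv:2304.08303 — 2 statements merged into one kernel-verified Lean document; each statement's English description precedes it below -/
import Mathlib

section
/- Let v : [0,T] → ℝ², w, p, θ scalars solve the linear rotating Boussinesq system (with all spatial derivatives interpreted on smooth fields on 𝕋² × (0,h)): ∂ₜv_l + (1/ε)v_l^⊥ + (1/ε)∇_h p_l = 0, ∂ₜw_l + (1/ε)∂_z p_l - (1/ε)θ_l = 0, ∂ₜθ_l + (1/ε)w_l = 0, div_h v_l + ∂_z w_l = 0. Then the potential vorticity Φ_l := ∂_z θ_l + curl_h v_l is conserved: ∂ₜΦ_l = 0. -/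
/-- Space-time: coordinates `(x, y, z, t)`. -/
abbrev R4 := ℝ × ℝ × ℝ × ℝ

noncomputable def dX (f : R4 → ℝ) (q : R4) : ℝ := fderiv ℝ f q (1, 0, 0, 0)
noncomputable def dY (f : R4 → ℝ) (q : R4) : ℝ := fderiv ℝ f q (0, 1, 0, 0)
noncomputable def dZ (f : R4 → ℝ) (q : R4) : ℝ := fderiv ℝ f q (0, 0, 1, 0)
noncomputable def dT (f : R4 → ℝ) (q : R4) : ℝ := fderiv ℝ f q (0, 0, 0, 1)

private lemma contDiffD (f : R4 → ℝ) (hf : ContDiff ℝ (⊤ : ℕ∞) f) (u : R4) :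
    ContDiff ℝ (⊤ : ℕ∞) (fun r => fderiv ℝ f r u) :=
  (hf.fderiv_right (by simp)).clm_apply contDiff_const

private lemma swapD (f : R4 → ℝ) (hf : ContDiff ℝ (⊤ : ℕ∞) f) (u v q : R4) :
    fderiv ℝ (fun r => fderiv ℝ f r u) q v = fderiv ℝ (fun r => fderiv ℝ f r v) q u := by
  have hdf : DifferentiableAt ℝ (fderiv ℝ f) q :=
    ((hf.fderiv_right (m := (⊤ : ℕ∞)) (by simp)).differentiable (by simp)) q
  have key : ∀ a : R4, fderiv ℝ (fun r => fderiv ℝ f r a) q =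
      (fderiv ℝ (fderiv ℝ f) q).flip a := by
    intro a
    have h := fderiv_clm_apply hdf (differentiableAt_const a)
    simpa using h
  rw [key u, key v]
  exact (hf.contDiffAt.isSymmSndFDerivAt (by rw [minSmoothness_of_isRCLikeNormedField]; exact WithTop.coe_le_coe.mpr le_top)) v u

private lemma fderiv_comb (a b : ℝ) (f g : R4 → ℝ) (hf : ContDiff ℝ (⊤ : ℕ∞) f)
    (hg : ContDiff ℝ (⊤ : ℕ∞) g) (q u : R4) :
    fderiv ℝ (fun r => a * f r + b * g r) q u
      = a * fderiv ℝ f q u + b * fderiv ℝ g q u := by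
  have hf' := hf.differentiable (by simp) q
  have hg' := hg.differentiable (by simp) q
  rw [fderiv_fun_add (hf'.const_mul a) (hg'.const_mul b), fderiv_const_mul hf' a,
    fderiv_const_mul hg' b]
  simp

/-- For smooth solutions of the linear rotating Boussinesq system
`∂ₜv_l + (1/ε)v_l^⊥ + (1/ε)∇_h p_l = 0`, `∂ₜw_l + (1/ε)∂_z p_l - (1/ε)θ_l = 0`,
`∂ₜθ_l + (1/ε)w_l = 0`, `div_h v_l + ∂_z w_l = 0`, the potential vorticity
`Φ_l := ∂_z θ_l + curl_h v_l` is conserved: `∂ₜΦ_l = 0`. -/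
theorem linear_potential_vorticity_conserved (ε : ℝ) (hε : 0 < ε)
    (v1 v2 w p θ : R4 → ℝ)
    (hv1 : ContDiff ℝ (⊤ : ℕ∞) v1) (hv2 : ContDiff ℝ (⊤ : ℕ∞) v2)
    (hw : ContDiff ℝ (⊤ : ℕ∞) w) (hp : ContDiff ℝ (⊤ : ℕ∞) p) (hθ : ContDiff ℝ (⊤ : ℕ∞) θ)
    (heqv1 : ∀ q : R4, dT v1 q - (1 / ε) * v2 q + (1 / ε) * dX p q = 0)
    (heqv2 : ∀ q : R4, dT v2 q + (1 / ε) * v1 q + (1 / ε) * dY p q = 0)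
    (heqw : ∀ q : R4, dT w q + (1 / ε) * dZ p q - (1 / ε) * θ q = 0)
    (heqθ : ∀ q : R4, dT θ q + (1 / ε) * w q = 0)
    (hdiv : ∀ q : R4, dX v1 q + dY v2 q + dZ w q = 0) :
    ∀ q : R4, dT (fun r => dZ θ r + (dX v2 r - dY v1 r)) q = 0 := by
  intro q
  set ex : R4 := (1, 0, 0, 0)
  set ey : R4 := (0, 1, 0, 0)
  set ez : R4 := (0, 0, 1, 0)
  set et : R4 := (0, 0, 0, 1)
  simp only [dT, dX, dY, dZ] at *
  have hA := contDiffD θ hθ ez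
  have hB := contDiffD v2 hv2 ex
  have hC := contDiffD v1 hv1 ey
  -- linearity of the outer derivative
  have hsplit : fderiv ℝ (fun r => fderiv ℝ θ r ez + (fderiv ℝ v2 r ex - fderiv ℝ v1 r ey)) q et
      = fderiv ℝ (fun r => fderiv ℝ θ r ez) q et
        + (fderiv ℝ (fun r => fderiv ℝ v2 r ex) q et
          - fderiv ℝ (fun r => fderiv ℝ v1 r ey) q et) := by
    rw [fderiv_fun_add (hA.differentiable (by simp) q)
        (((hB.differentiable (by simp)).fun_sub (hC.differentiable (by simp))) q),
      fderiv_fun_sub (hB.differentiable (by simp) q) (hC.differentiable (by simp) q)]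
    simp
  rw [hsplit]
  -- term A : ∂ₜ∂_z θ
  have hAval : fderiv ℝ (fun r => fderiv ℝ θ r ez) q et
      = (-(1/ε)) * fderiv ℝ w q ez + 0 * fderiv ℝ w q ez := by
    rw [swapD θ hθ ez et q]
    have hfun : (fun r => fderiv ℝ θ r et) = fun r => (-(1/ε)) * w r + 0 * w r := by
      funext r
      have := heqθ r
      ring_nf
      ring_nf at this
      linarith
    rw [hfun, fderiv_comb (-(1/ε)) 0 w w hw hw q ez]
  -- term B : ∂ₜ∂ₓ v2
  have hBval : fderiv ℝ (fun r => fderiv ℝ v2 r ex) q et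
      = (-(1/ε)) * fderiv ℝ v1 q ex
        + (-(1/ε)) * fderiv ℝ (fun r => fderiv ℝ p r ey) q ex := by
    rw [swapD v2 hv2 ex et q]
    have hfun : (fun r => fderiv ℝ v2 r et)
        = fun r => (-(1/ε)) * v1 r + (-(1/ε)) * (fderiv ℝ p r ey) := by
      funext r
      have := heqv2 r
      ring_nf
      ring_nf at this
      linarith
    rw [hfun, fderiv_comb (-(1/ε)) (-(1/ε)) v1 _ hv1 (contDiffD p hp ey) q ex]
  -- term C : ∂ₜ∂_y v1
  have hCval : fderiv ℝ (fun r => fderiv ℝ v1 r ey) q et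
      = (1/ε) * fderiv ℝ v2 q ey
        + (-(1/ε)) * fderiv ℝ (fun r => fderiv ℝ p r ex) q ey := by
    rw [swapD v1 hv1 ey et q]
    have hfun : (fun r => fderiv ℝ v1 r et)
        = fun r => (1/ε) * v2 r + (-(1/ε)) * (fderiv ℝ p r ex) := by
      funext r
      have := heqv1 r
      ring_nf
      ring_nf at this
      linarith
    rw [hfun, fderiv_comb (1/ε) (-(1/ε)) v2 _ hv2 (contDiffD p hp ex) q ey]
  have hpswap := swapD p hp ey ex q
  have hd : (fderiv ℝ v1 q) ex + (fderiv ℝ v2 q) ey + (fderiv ℝ w q) ez = 0 := hdiv q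
  rw [hAval, hBval, hCval, hpswap]
  linear_combination (-(1/ε)) * hd
end

section
/- Let v, w, θ be smooth solutions on 𝕋² × (0,h) of the nonlinear rotating Boussinesq system ∂ₜv + v·∇_h v + w∂_z v + (1/ε)v^⊥ + (1/ε)∇_h p = 0, ∂ₜθ + v·∇_h θ + w∂_z θ + w/ε = 0, div_h v + ∂_z w = 0. Then the potential vorticity Φ := ∂_z θ + curl_h v satisfies ∂ₜΦ + v·∇_h Φ + w ∂_z Φ + N₁ = 0 with N₁ = curl_h v · div_h v + ∂_z v · ∇_h^⊥ w + ∂_z v · ∇_h θ + ∂_z w ∂_z θ; in particular the singular O(1/ε) terms cancel. -/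
/-- The potential vorticity `Φ := ∂_z θ + curl_h v`. -/
noncomputable def pv (v1 v2 θ : R4 → ℝ) (q : R4) : ℝ :=
  dZ θ q + (dX v2 q - dY v1 q)

noncomputable def dd (u : R4) (f : R4 → ℝ) (q : R4) : ℝ := fderiv ℝ f q u

lemma contDiff_dd (u : R4) {f : R4 → ℝ} (hf : ContDiff ℝ (⊤ : ℕ∞) f) : ContDiff ℝ (⊤ : ℕ∞) (dd u f) :=
  (hf.fderiv_right (by simp)).clm_apply contDiff_const

lemma dd_differentiable (u : R4) {f : R4 → ℝ} (hf : ContDiff ℝ (⊤ : ℕ∞) f) :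
    Differentiable ℝ (dd u f) :=
  (contDiff_dd u hf).differentiable (by simp)

lemma dd_add (u : R4) {f g : R4 → ℝ} (hf : Differentiable ℝ f) (hg : Differentiable ℝ g)
    (q : R4) : dd u (fun x => f x + g x) q = dd u f q + dd u g q := by
  unfold dd
  rw [fderiv_fun_add (hf q) (hg q)]
  simp

lemma dd_sub (u : R4) {f g : R4 → ℝ} (hf : Differentiable ℝ f) (hg : Differentiable ℝ g)
    (q : R4) : dd u (fun x => f x - g x) q = dd u f q - dd u g q := by
  unfold dd
  rw [fderiv_fun_sub (hf q) (hg q)]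
  simp

lemma dd_mul (u : R4) {f g : R4 → ℝ} (hf : Differentiable ℝ f) (hg : Differentiable ℝ g)
    (q : R4) : dd u (fun x => f x * g x) q = dd u f q * g q + f q * dd u g q := by
  unfold dd
  rw [fderiv_fun_mul (hf q) (hg q)]
  simp [smul_eq_mul]
  ring

lemma dd_const_mul (u : R4) (c : ℝ) {f : R4 → ℝ} (hf : Differentiable ℝ f) (q : R4) :
    dd u (fun x => c * f x) q = c * dd u f q := by
  unfold dd
  rw [fderiv_const_mul (hf q)]
  simp

lemma dd_of_eq_zero (u : R4) {F : R4 → ℝ} (h : ∀ q, F q = 0) (q : R4) : dd u F q = 0 := by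
  have hF : F = fun _ => (0 : ℝ) := funext h
  simp [dd, hF]

lemma dd_comm (u u' : R4) {f : R4 → ℝ} (hf : ContDiff ℝ (⊤ : ℕ∞) f) (q : R4) :
    dd u (dd u' f) q = dd u' (dd u f) q := by
  have hdf : Differentiable ℝ (fderiv ℝ f) := (hf.fderiv_right (m := 1) (WithTop.coe_le_coe.mpr le_top)).differentiable one_ne_zero
  have key : ∀ a b : R4, dd a (dd b f) q = fderiv ℝ (fderiv ℝ f) q a b := by
    intro a b
    unfold dd
    rw [show (fun y => fderiv ℝ f y b) = fun y => (fderiv ℝ f y) b from rfl,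
      fderiv_clm_apply (hdf q) (differentiableAt_const _)]
    simp
  rw [key, key]
  exact (hf.contDiffAt.isSymmSndFDerivAt (by rw [minSmoothness_of_isRCLikeNormedField]; exact WithTop.coe_le_coe.mpr le_top)) u u'

/-- Differentiating a transport equation `∂ₜ f + v·∇f + w ∂_z f + R = 0`
in an arbitrary direction `u`. -/
lemma diff_transport (u : R4) {v1 v2 w f R : R4 → ℝ}
    (hv1 : ContDiff ℝ (⊤ : ℕ∞) v1) (hv2 : ContDiff ℝ (⊤ : ℕ∞) v2) (hw : ContDiff ℝ (⊤ : ℕ∞) w)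
    (hf : ContDiff ℝ (⊤ : ℕ∞) f) (hR : Differentiable ℝ R)
    (heq : ∀ x, dd (0,0,0,1) f x + v1 x * dd (1,0,0,0) f x + v2 x * dd (0,1,0,0) f x
      + w x * dd (0,0,1,0) f x + R x = 0) (q : R4) :
    dd u (dd (0,0,0,1) f) q
      + (dd u v1 q * dd (1,0,0,0) f q + v1 q * dd u (dd (1,0,0,0) f) q)
      + (dd u v2 q * dd (0,1,0,0) f q + v2 q * dd u (dd (0,1,0,0) f) q)
      + (dd u w q * dd (0,0,1,0) f q + w q * dd u (dd (0,0,1,0) f) q)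
      + dd u R q = 0 := by
  have hdT := dd_differentiable (0,0,0,1) hf
  have hdX := dd_differentiable (1,0,0,0) hf
  have hdY := dd_differentiable (0,1,0,0) hf
  have hdZ := dd_differentiable (0,0,1,0) hf
  have hA : Differentiable ℝ (fun x => v1 x * dd (1,0,0,0) f x) :=
    (hv1.differentiable (by simp)).mul hdX
  have hB : Differentiable ℝ (fun x => v2 x * dd (0,1,0,0) f x) :=
    (hv2.differentiable (by simp)).mul hdY
  have hC : Differentiable ℝ (fun x => w x * dd (0,0,1,0) f x) :=
    (hw.differentiable (by simp)).mul hdZ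
  have h1 : Differentiable ℝ (fun x => dd (0,0,0,1) f x + v1 x * dd (1,0,0,0) f x) :=
    hdT.add hA
  have h2 : Differentiable ℝ (fun x => dd (0,0,0,1) f x + v1 x * dd (1,0,0,0) f x
      + v2 x * dd (0,1,0,0) f x) := h1.add hB
  have h3 : Differentiable ℝ (fun x => dd (0,0,0,1) f x + v1 x * dd (1,0,0,0) f x
      + v2 x * dd (0,1,0,0) f x + w x * dd (0,0,1,0) f x) := h2.add hC
  have h0 : dd u (fun x => dd (0,0,0,1) f x + v1 x * dd (1,0,0,0) f x
      + v2 x * dd (0,1,0,0) f x + w x * dd (0,0,1,0) f x + R x) q = 0 :=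
    dd_of_eq_zero u heq q
  have e1 : dd u (fun x => dd (0,0,0,1) f x + v1 x * dd (1,0,0,0) f x
        + v2 x * dd (0,1,0,0) f x + w x * dd (0,0,1,0) f x + R x) q
      = dd u (fun x => dd (0,0,0,1) f x + v1 x * dd (1,0,0,0) f x
        + v2 x * dd (0,1,0,0) f x + w x * dd (0,0,1,0) f x) q + dd u R q :=
    dd_add u h3 hR q
  have e2 : dd u (fun x => dd (0,0,0,1) f x + v1 x * dd (1,0,0,0) f x
        + v2 x * dd (0,1,0,0) f x + w x * dd (0,0,1,0) f x) q
      = dd u (fun x => dd (0,0,0,1) f x + v1 x * dd (1,0,0,0) f x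
        + v2 x * dd (0,1,0,0) f x) q + dd u (fun x => w x * dd (0,0,1,0) f x) q :=
    dd_add u h2 hC q
  have e3 : dd u (fun x => dd (0,0,0,1) f x + v1 x * dd (1,0,0,0) f x
        + v2 x * dd (0,1,0,0) f x) q
      = dd u (fun x => dd (0,0,0,1) f x + v1 x * dd (1,0,0,0) f x) q
        + dd u (fun x => v2 x * dd (0,1,0,0) f x) q :=
    dd_add u h1 hB q
  have e4 : dd u (fun x => dd (0,0,0,1) f x + v1 x * dd (1,0,0,0) f x) q
      = dd u (dd (0,0,0,1) f) q + dd u (fun x => v1 x * dd (1,0,0,0) f x) q :=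
    dd_add u hdT hA q
  have m1 : dd u (fun x => v1 x * dd (1,0,0,0) f x) q
      = dd u v1 q * dd (1,0,0,0) f q + v1 q * dd u (dd (1,0,0,0) f) q :=
    dd_mul u (hv1.differentiable (by simp)) hdX q
  have m2 : dd u (fun x => v2 x * dd (0,1,0,0) f x) q
      = dd u v2 q * dd (0,1,0,0) f q + v2 q * dd u (dd (0,1,0,0) f) q :=
    dd_mul u (hv2.differentiable (by simp)) hdY q
  have m3 : dd u (fun x => w x * dd (0,0,1,0) f x) q
      = dd u w q * dd (0,0,1,0) f q + w q * dd u (dd (0,0,1,0) f) q :=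
    dd_mul u (hw.differentiable (by simp)) hdZ q
  linarith [h0, e1, e2, e3, e4, m1, m2, m3]

/-- For smooth solutions of the nonlinear rotating Boussinesq system, the
potential vorticity `Φ := ∂_zθ + curl_h v` satisfies
`∂ₜΦ + v·∇_hΦ + w∂_zΦ + N₁ = 0`, with
`N₁ = curl_h v · div_h v + ∂_z v·∇_h^⊥ w + ∂_z v·∇_h θ + ∂_z w ∂_z θ`;
in particular the singular `O(1/ε)` terms cancel. -/
theorem nonlinear_pv_equation (ε : ℝ) (hε : 0 < ε)
    (v1 v2 w p θ : R4 → ℝ)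
    (hv1 : ContDiff ℝ (⊤ : ℕ∞) v1) (hv2 : ContDiff ℝ (⊤ : ℕ∞) v2)
    (hw : ContDiff ℝ (⊤ : ℕ∞) w) (hp : ContDiff ℝ (⊤ : ℕ∞) p) (hθ : ContDiff ℝ (⊤ : ℕ∞) θ)
    (heqv1 : ∀ q : R4, dT v1 q + v1 q * dX v1 q + v2 q * dY v1 q
      + w q * dZ v1 q - (1 / ε) * v2 q + (1 / ε) * dX p q = 0)
    (heqv2 : ∀ q : R4, dT v2 q + v1 q * dX v2 q + v2 q * dY v2 q
      + w q * dZ v2 q + (1 / ε) * v1 q + (1 / ε) * dY p q = 0)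
    (heqθ : ∀ q : R4, dT θ q + v1 q * dX θ q + v2 q * dY θ q
      + w q * dZ θ q + w q / ε = 0)
    (hdiv : ∀ q : R4, dX v1 q + dY v2 q + dZ w q = 0) :
    ∀ q : R4,
      dT (pv v1 v2 θ) q + v1 q * dX (pv v1 v2 θ) q + v2 q * dY (pv v1 v2 θ) q
        + w q * dZ (pv v1 v2 θ) q
        + ((dX v2 q - dY v1 q) * (dX v1 q + dY v2 q)
            + (dZ v1 q * (-(dY w q)) + dZ v2 q * dX w q)
            + (dZ v1 q * dX θ q + dZ v2 q * dY θ q)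
            + dZ w q * dZ θ q) = 0 := by
  have eX : dX = dd (1,0,0,0) := rfl
  have eY : dY = dd (0,1,0,0) := rfl
  have eZ : dZ = dd (0,0,1,0) := rfl
  have eT : dT = dd (0,0,0,1) := rfl
  have epv : pv v1 v2 θ
      = fun x => dd (0,0,1,0) θ x + (dd (1,0,0,0) v2 x - dd (0,1,0,0) v1 x) := rfl
  simp only [eX, eY, eZ, eT, epv] at heqv1 heqv2 heqθ hdiv ⊢
  intro q
  -- differentiabilities
  have Dv1 := hv1.differentiable (by simp)
  have Dv2 := hv2.differentiable (by simp)
  have Dw := hw.differentiable (by simp)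
  have DXp := dd_differentiable (1,0,0,0) hp
  have DYp := dd_differentiable (0,1,0,0) hp
  -- right-hand side functions
  have hR1 : Differentiable ℝ (fun x => (-(1/ε)) * v2 x + (1/ε) * dd (1,0,0,0) p x) :=
    (Dv2.const_mul _).add (DXp.const_mul _)
  have hR2 : Differentiable ℝ (fun x => (1/ε) * v1 x + (1/ε) * dd (0,1,0,0) p x) :=
    (Dv1.const_mul _).add (DYp.const_mul _)
  have hR3 : Differentiable ℝ (fun x => (1/ε) * w x) := Dw.const_mul _
  have heqv1' : ∀ x, dd (0,0,0,1) v1 x + v1 x * dd (1,0,0,0) v1 x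
      + v2 x * dd (0,1,0,0) v1 x + w x * dd (0,0,1,0) v1 x
      + ((-(1/ε)) * v2 x + (1/ε) * dd (1,0,0,0) p x) = 0 := by
    intro x; linear_combination heqv1 x
  have heqv2' : ∀ x, dd (0,0,0,1) v2 x + v1 x * dd (1,0,0,0) v2 x
      + v2 x * dd (0,1,0,0) v2 x + w x * dd (0,0,1,0) v2 x
      + ((1/ε) * v1 x + (1/ε) * dd (0,1,0,0) p x) = 0 := by
    intro x; linear_combination heqv2 x
  have heqθ' : ∀ x, dd (0,0,0,1) θ x + v1 x * dd (1,0,0,0) θ x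
      + v2 x * dd (0,1,0,0) θ x + w x * dd (0,0,1,0) θ x
      + ((1/ε) * w x) = 0 := by
    intro x
    have h := heqθ x
    field_simp at h ⊢
    linear_combination h
  have H1 := diff_transport (0,1,0,0) hv1 hv2 hw hv1 hR1 heqv1' q
  have H2 := diff_transport (1,0,0,0) hv1 hv2 hw hv2 hR2 heqv2' q
  have H3 := diff_transport (0,0,1,0) hv1 hv2 hw hθ hR3 heqθ' q
  -- expand the derivatives of the R-terms
  have r1 : dd (0,1,0,0) (fun x => (-(1/ε)) * v2 x + (1/ε) * dd (1,0,0,0) p x) q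
      = (-(1/ε)) * dd (0,1,0,0) v2 q + (1/ε) * dd (0,1,0,0) (dd (1,0,0,0) p) q := by
    rw [dd_add _ (Dv2.const_mul _) (DXp.const_mul _) q,
      dd_const_mul _ _ Dv2 q, dd_const_mul _ _ DXp q]
  have r2 : dd (1,0,0,0) (fun x => (1/ε) * v1 x + (1/ε) * dd (0,1,0,0) p x) q
      = (1/ε) * dd (1,0,0,0) v1 q + (1/ε) * dd (1,0,0,0) (dd (0,1,0,0) p) q := by
    rw [dd_add _ (Dv1.const_mul _) (DYp.const_mul _) q,
      dd_const_mul _ _ Dv1 q, dd_const_mul _ _ DYp q]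
  have r3 : dd (0,0,1,0) (fun x => (1/ε) * w x) q = (1/ε) * dd (0,0,1,0) w q :=
    dd_const_mul _ _ Dw q
  rw [r1] at H1; rw [r2] at H2; rw [r3] at H3
  -- symmetry of second derivatives, to canonical form
  rw [dd_comm (0,1,0,0) (0,0,0,1) hv1 q, dd_comm (0,1,0,0) (1,0,0,0) hv1 q,
    dd_comm (0,1,0,0) (0,0,1,0) hv1 q, dd_comm (0,1,0,0) (1,0,0,0) hp q] at H1
  rw [dd_comm (1,0,0,0) (0,0,0,1) hv2 q, dd_comm (1,0,0,0) (0,1,0,0) hv2 q,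
    dd_comm (1,0,0,0) (0,0,1,0) hv2 q] at H2
  rw [dd_comm (0,0,1,0) (0,0,0,1) hθ q, dd_comm (0,0,1,0) (1,0,0,0) hθ q,
    dd_comm (0,0,1,0) (0,1,0,0) hθ q] at H3
  -- expand derivatives of the potential vorticity
  have Dθz := dd_differentiable (0,0,1,0) hθ
  have Dv2x := dd_differentiable (1,0,0,0) hv2
  have Dv1y := dd_differentiable (0,1,0,0) hv1
  have hcurl : Differentiable ℝ (fun x => dd (1,0,0,0) v2 x - dd (0,1,0,0) v1 x) :=
    Dv2x.sub Dv1y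
  have epvd : ∀ u : R4, dd u (fun x => dd (0,0,1,0) θ x
        + (dd (1,0,0,0) v2 x - dd (0,1,0,0) v1 x)) q
      = dd u (dd (0,0,1,0) θ) q
        + (dd u (dd (1,0,0,0) v2) q - dd u (dd (0,1,0,0) v1) q) := by
    intro u
    rw [dd_add u Dθz hcurl q, dd_sub u Dv2x Dv1y q]
  rw [epvd (0,0,0,1), epvd (1,0,0,0), epvd (0,1,0,0), epvd (0,0,1,0)]
  -- also put the p-term of H2 in the same form as H1
  rw [dd_comm (1,0,0,0) (0,1,0,0) hp q] at H2
  linear_combination H2 - H1 + H3 - (1/ε) * hdiv q + (1/ε) * dd_comm (1,0,0,0) (0,1,0,0) hp q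
end
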